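/- Let X be an object of Mod(C,A) and q an object of C. Then: (a) if X is a projective object of Mod(C,A), then X(q) is a projective left A-module; (b) if X is an injective object of Mod(C,A), then X(q) is an injective left A-module; (c) if X is a flat object of Mod(C,A), then X(q) is a flat left A-module; (d) if X is a cotorsion object of Mod(C,A), then X(q) is a cotorsion left A-module. -/

import Mathlib

/-!
STATEMENT 1 (Proposition `degreewise`): for `X` in `Mod(C,A)` and `q ∈ C`:
(a) `X` projective ⟹ `X(q)` projective; (b) `X` injective ⟹ `X(q)` injective;
(c) `X` flat ⟹ `X(q)` flat; (d) `X` cotorsion ⟹ `X(q)` cotorsion.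
Flat means: a filtered colimit of projective objects (equivalently, of finitely
generated projective objects); cotorsion means right `Ext¹`-orthogonal to flats.
-/

open CategoryTheory CategoryTheory.Limits Opposite

noncomputable section
namespace Paper

section Generic
variable {M : Type 1} [Category.{0} M] [Abelian M]

/-- `Ext^1(F, X) = 0`, expressed by the splitting of all short exact sequences
`0 → X → Y → F → 0`. -/
def Ext1Zero (F X : M) : Prop :=
  ∀ (Y : M) (i : X ⟶ Y) (p : Y ⟶ F) (w : i ≫ p = 0),
    (ShortComplex.mk i p w).ShortExact → ∃ r : Y ⟶ X, i ≫ r = 𝟙 X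

/-- flat object: a filtered colimit of projective objects -/
def IsFlatObj (X : M) : Prop :=
  ∃ (J : Type) (_ : SmallCategory J) (_ : IsFiltered J) (D : J ⥤ M) (c : Cocone D),
    (∀ j, Projective (D.obj j)) ∧ Nonempty (IsColimit c) ∧ Nonempty (c.pt ≅ X)

/-- cotorsion object: right `Ext¹`-orthogonal to all flat objects -/
def IsCotorsion (X : M) : Prop := ∀ F : M, IsFlatObj F → Ext1Zero F X

end Generic

variable (k : Type) [CommRing k] (A : Type) [Ring A] [Algebra k A]

instance (M : ModuleCat.{0} A) : Module k M := RestrictScalars.module k A M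
instance (M : ModuleCat.{0} A) : IsScalarTower k A M := RestrictScalars.isScalarTower k A M

instance modLinear : CategoryTheory.Linear k (ModuleCat.{0} A) where
  homModule _ _ := inferInstance
  smul_comp := by
    intros
    ext
    first
      | simp [LinearMap.map_smul_of_tower]
      | (dsimp only [ModuleCat.hom_comp, ModuleCat.hom_smul, LinearMap.comp_apply]
         rw [LinearMap.smul_apply, LinearMap.map_smul_of_tower]
         rfl)

variable (C : Type) [SmallCategory C] [Preadditive C] [CategoryTheory.Linear k C]

/-- The predicate singling out the additive `k`-linear functors `C ⥤ Mod A`. -/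
def LinPred (F : C ⥤ ModuleCat.{0} A) : Prop :=
  F.Additive ∧ ∀ ⦃X Y : C⦄ (f : X ⟶ Y) (c : k), F.map (c • f) = c • F.map f

/-- `Mod(C,A)`: the category of additive `k`-linear functors `C ⥤ Mod A`. -/
abbrev ModCA := ObjectProperty.FullSubcategory (LinPred k A C)

/-- The evaluation functor `E_q : Mod(C,A) ⥤ Mod A`. -/
def evalQ (q : C) : ModCA k A C ⥤ ModuleCat.{0} A :=
  ObjectProperty.ι _ ⋙ (evaluation C (ModuleCat.{0} A)).obj q

instance (M : ModuleCat.{0} A) : SMulCommClass k A M :=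
  ⟨fun c a m => by
    rw [← algebraMap_smul (R := k) A c (a • m), ← algebraMap_smul (R := k) A c m,
      smul_smul, smul_smul, Algebra.commutes]⟩

section Gfun

variable {k A C}
variable (q : C)

lemma kSmul_def (M : ModuleCat.{0} A) (c : k) (m : M) :
    c • m = algebraMap k A c • m := (algebraMap_smul A c m).symm

/-- precomposition, as an `A`-linear map -/
def precompL {p p' : C} (f : p ⟶ p') (M : ModuleCat.{0} A) :
    ((p ⟶ q) →ₗ[k] M) →ₗ[A] ((p' ⟶ q) →ₗ[k] M) where
  toFun φ := φ.comp (Linear.leftComp k q f)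
  map_add' _ _ := rfl
  map_smul' _ _ := rfl

@[simp] lemma precompL_apply {p p' : C} (f : p ⟶ p') (M : ModuleCat.{0} A)
    (φ : (p ⟶ q) →ₗ[k] M) (h : p' ⟶ q) : precompL (k := k) q f M φ h = φ (f ≫ h) := rfl

lemma precompL_id (p : C) (M : ModuleCat.{0} A) :
    precompL (k := k) q (𝟙 p) M = LinearMap.id := by
  ext φ h; simp

lemma precompL_comp {p p' p'' : C} (f : p ⟶ p') (g : p' ⟶ p'') (M : ModuleCat.{0} A) :
    precompL (k := k) q (f ≫ g) M = (precompL (k := k) q g M).comp (precompL (k := k) q f M) := by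
  ext φ h; simp

/-- the underlying functor of `G_q M` -/
def GobjFunctor (M : ModuleCat.{0} A) : C ⥤ ModuleCat.{0} A where
  obj p := ModuleCat.of A ((p ⟶ q) →ₗ[k] M)
  map f := ModuleCat.ofHom (precompL (k := k) q f M)
  map_id p := ModuleCat.hom_ext (precompL_id q p M)
  map_comp f g := ModuleCat.hom_ext (precompL_comp q f g M)

lemma GobjFunctor_linpred (M : ModuleCat.{0} A) : LinPred k A C (GobjFunctor (k := k) q M) := by
  constructor
  · constructor; intro p p' f g
    show ModuleCat.ofHom (precompL (k := k) q (f + g) M) = ModuleCat.ofHom (precompL (k := k) q f M) + ModuleCat.ofHom (precompL (k := k) q g M)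
    ext φ h; simp [Preadditive.add_comp]
  · intro p p' f c
    show ModuleCat.ofHom (precompL (k := k) q (c • f) M) = c • ModuleCat.ofHom (precompL (k := k) q f M)
    ext φ h
    simp only [ModuleCat.hom_smul, ModuleCat.hom_ofHom, precompL_apply, LinearMap.smul_apply, Linear.smul_comp, map_smul]

/-- The right adjoint `G_q` of evaluation at `q`. -/
def Gfun : ModuleCat.{0} A ⥤ ModCA k A C where
  obj M := ⟨GobjFunctor (k := k) q M, GobjFunctor_linpred q M⟩
  map {M N} e := ObjectProperty.homMk
    { app := fun p => ModuleCat.ofHom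
        { toFun := fun φ => (LinearMap.restrictScalars k e.hom).comp φ
          map_add' := fun φ ψ => LinearMap.ext fun h => map_add e.hom _ _
          map_smul' := fun a φ => LinearMap.ext fun h => map_smul e.hom a _ }
      naturality := fun p p' f => ModuleCat.hom_ext (LinearMap.ext fun φ => LinearMap.ext fun h => rfl) }
  map_id M := ObjectProperty.hom_ext _ (NatTrans.ext (funext fun p => ModuleCat.hom_ext (LinearMap.ext fun φ => LinearMap.ext fun h => rfl)))
  map_comp e e' := ObjectProperty.hom_ext _ (NatTrans.ext (funext fun p => ModuleCat.hom_ext (LinearMap.ext fun φ => LinearMap.ext fun h => rfl)))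

end Gfun

section EvalGAdj

variable {k A C}
variable (q : C)

lemma apply_kSmul {M N : ModuleCat.{0} A} (u : M ⟶ N) (c : k) (y : M) :
    u (c • y) = c • u y := by
  show u.hom (c • y) = c • u.hom y
  rw [kSmul_def, map_smul, ← kSmul_def]

lemma modca_smul_app (X : ModCA k A C) {p p' : C} (c : k) (g : p ⟶ p') (x : X.obj.obj p) :
    (X.obj.map (c • g)) x = c • (X.obj.map g x) := by
  rw [X.property.2 g c]; rfl

/-- transpose of `u : X(q) ⟶ M` along `evalQ ⊣ Gfun` -/
def toG (X : ModCA k A C) (M : ModuleCat.{0} A) (u : (evalQ k A C q).obj X ⟶ M) :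
    X ⟶ (Gfun q).obj M := ObjectProperty.homMk {
  app p := ModuleCat.ofHom
    { toFun := fun x =>
        { toFun := fun h => u (X.obj.map h x)
          map_add' := fun h h' => by
            haveI := X.property.1
            show u (X.obj.map (h + h') x) = u (X.obj.map h x) + u (X.obj.map h' x)
            rw [X.obj.map_add]
            show u ((X.obj.map h) x + (X.obj.map h') x) = _
            exact map_add u.hom _ _
          map_smul' := fun c h => by
            show u (X.obj.map (c • h) x) = c • u (X.obj.map h x)
            rw [modca_smul_app]; exact apply_kSmul u c _ }
      map_add' := fun x x' => by
        apply LinearMap.ext; intro h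
        show u (X.obj.map h (x + x')) = u (X.obj.map h x) + u (X.obj.map h x')
        rw [map_add]; exact map_add u.hom _ _
      map_smul' := fun a x => by
        apply LinearMap.ext; intro h
        show u (X.obj.map h (a • x)) = a • u (X.obj.map h x)
        rw [map_smul]; exact map_smul u.hom _ _ }
  naturality p p' f := by
    apply ModuleCat.hom_ext; apply LinearMap.ext; intro x; apply LinearMap.ext; intro h
    show u (X.obj.map h (X.obj.map f x)) = u (X.obj.map (f ≫ h) x)
    rw [X.obj.map_comp]; rfl }

/-- identity coercion helping elaboration -/
abbrev asLin {M : ModuleCat.{0} A} {p : C} (ψ : (GobjFunctor (k := k) q M).obj p) :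
    (p ⟶ q) →ₗ[k] M := ψ

/-- transpose of `η : X ⟶ G_q M` along `evalQ ⊣ Gfun` -/
def fromG (X : ModCA k A C) (M : ModuleCat.{0} A) (η : X ⟶ (Gfun q).obj M) :
    (evalQ k A C q).obj X ⟶ M := ModuleCat.ofHom {
  toFun x := asLin q (η.hom.app q x) (𝟙 q)
  map_add' x x' := by
    show asLin q (η.hom.app q (x + x')) (𝟙 q) = asLin q (η.hom.app q x) (𝟙 q) + asLin q (η.hom.app q x') (𝟙 q)
    rw [map_add]; rfl
  map_smul' a x := by
    show asLin q (η.hom.app q (a • x)) (𝟙 q) = a • asLin q (η.hom.app q x) (𝟙 q)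
    rw [map_smul]; rfl }

/-- the adjunction `evalQ ⊣ Gfun` -/
def evalGAdj : evalQ k A C q ⊣ Gfun q :=
  Adjunction.mkOfHomEquiv
    { homEquiv := fun X M =>
        { toFun := toG q X M
          invFun := fromG q X M
          left_inv := fun u => by
            apply ModuleCat.hom_ext; apply LinearMap.ext; intro x
            show u (X.obj.map (𝟙 q) x) = u x
            rw [X.obj.map_id]; rfl
          right_inv := fun η => by
            apply ObjectProperty.hom_ext; apply NatTrans.ext; funext p
            apply ModuleCat.hom_ext; apply LinearMap.ext; intro x; apply LinearMap.ext; intro h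
            have e2 : (η.hom.app q) ((X.obj.map h) x)
                = precompL (k := k) q h M ((η.hom.app p) x) := by
              have := congrArg
                (fun (v : X.obj.obj p ⟶ (GobjFunctor (k := k) q M).obj q) => v x)
                (η.hom.naturality h)
              exact this
            show asLin q (η.hom.app q (X.obj.map h x)) (𝟙 q) = asLin q (η.hom.app p x) h
            rw [e2]
            show asLin q (η.hom.app p x) (h ≫ 𝟙 q) = asLin q (η.hom.app p x) h
            rw [Category.comp_id] }
      homEquiv_naturality_left_symm := fun f g => by
        apply ModuleCat.hom_ext; apply LinearMap.ext; intro x; rfl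
      homEquiv_naturality_right := fun u h => by
        apply ObjectProperty.hom_ext; apply NatTrans.ext; funext p
        apply ModuleCat.hom_ext; apply LinearMap.ext; intro x; apply LinearMap.ext; intro h'; rfl }

end EvalGAdj

section Ffun

open TensorProduct in
/-- postcomposition on the tensor factor, as an `A`-linear map -/
def tensL {p p' : C} (q : C) (f : p ⟶ p') (M : ModuleCat.{0} A) :
    (TensorProduct k M (q ⟶ p)) →ₗ[A] (TensorProduct k M (q ⟶ p')) :=
  TensorProduct.AlgebraTensorModule.map (LinearMap.id (R := A) (M := M)) (Linear.rightComp k q f)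

variable {k A C}
variable (q : C)

open TensorProduct

@[simp] lemma tensL_apply {p p' : C} (f : p ⟶ p') (M : ModuleCat.{0} A)
    (m : M) (h : q ⟶ p) : tensL k A C q f M (m ⊗ₜ h) = m ⊗ₜ (h ≫ f) := rfl

lemma tensor_kSmul (M : ModuleCat.{0} A) {p : C} (c : k) (m : M) (h : q ⟶ p) :
    (c • (m ⊗ₜ h : TensorProduct k M (q ⟶ p))) = (c • m) ⊗ₜ h := by
  rw [kSmul_def M c m, ← TensorProduct.smul_tmul']
  rfl

/-- the underlying functor of `F_q M` -/
def FobjFunctor (M : ModuleCat.{0} A) : C ⥤ ModuleCat.{0} A where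
  obj p := ModuleCat.of A (TensorProduct k M (q ⟶ p))
  map f := ModuleCat.ofHom (tensL k A C q f M)
  map_id p := by
    apply ModuleCat.hom_ext; apply TensorProduct.AlgebraTensorModule.ext; intro m h
    show m ⊗ₜ (h ≫ 𝟙 p) = m ⊗ₜ h
    rw [Category.comp_id]
  map_comp f g := by
    apply ModuleCat.hom_ext; apply TensorProduct.AlgebraTensorModule.ext; intro m h
    show m ⊗ₜ (h ≫ (f ≫ g)) = m ⊗ₜ ((h ≫ f) ≫ g)
    rw [Category.assoc]

lemma FobjFunctor_linpred (M : ModuleCat.{0} A) : LinPred k A C (FobjFunctor (k := k) q M) := by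
  constructor
  · constructor; intro p p' f g
    apply ModuleCat.hom_ext; apply TensorProduct.AlgebraTensorModule.ext; intro m h
    show m ⊗ₜ (h ≫ (f + g)) = (tensL k A C q f M + tensL k A C q g M) (m ⊗ₜ h)
    rw [Preadditive.comp_add, TensorProduct.tmul_add]
    rfl
  · intro p p' f c
    apply ModuleCat.hom_ext; apply TensorProduct.AlgebraTensorModule.ext; intro m h
    show m ⊗ₜ (h ≫ (c • f)) = (c • tensL k A C q f M) (m ⊗ₜ h)
    rw [Linear.comp_smul, ← TensorProduct.smul_tmul, LinearMap.smul_apply, tensL_apply,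
      tensor_kSmul]

/-- The left adjoint `F_q` of evaluation at `q`. -/
def Ffun : ModuleCat.{0} A ⥤ ModCA k A C where
  obj M := ⟨FobjFunctor (k := k) q M, FobjFunctor_linpred q M⟩
  map {M N} e := ObjectProperty.homMk
    { app := fun p => ModuleCat.ofHom (TensorProduct.AlgebraTensorModule.map e.hom LinearMap.id)
      naturality := fun p p' f => by
        apply ModuleCat.hom_ext; apply TensorProduct.AlgebraTensorModule.ext; intro m h; rfl }
  map_id M := by
    apply ObjectProperty.hom_ext; apply NatTrans.ext; funext p
    apply ModuleCat.hom_ext; apply TensorProduct.AlgebraTensorModule.ext; intro m h; rfl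
  map_comp e e' := by
    apply ObjectProperty.hom_ext; apply NatTrans.ext; funext p
    apply ModuleCat.hom_ext; apply TensorProduct.AlgebraTensorModule.ext; intro m h; rfl

/-- the bilinear map underlying the transpose of `u : M ⟶ X(q)` -/
def fromEbil (M : ModuleCat.{0} A) (X : ModCA k A C) (u : M ⟶ (evalQ k A C q).obj X) (p : C) :
    M →ₗ[A] ((q ⟶ p) →ₗ[k] X.obj.obj p) where
  toFun m :=
    { toFun := fun h => X.obj.map h (u m)
      map_add' := fun h h' => by
        haveI := X.property.1
        show X.obj.map (h + h') (u m) = X.obj.map h (u m) + X.obj.map h' (u m)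
        rw [X.obj.map_add]; rfl
      map_smul' := fun c h => by
        show X.obj.map (c • h) (u m) = c • (X.obj.map h (u m))
        exact modca_smul_app X c h (u m) }
  map_add' m m' := by
    apply LinearMap.ext; intro h
    show X.obj.map h (u (m + m')) = X.obj.map h (u m) + X.obj.map h (u m')
    exact (congrArg (fun y => X.obj.map h y) (map_add u.hom m m')).trans (map_add _ _ _)
  map_smul' a m := by
    apply LinearMap.ext; intro h
    show X.obj.map h (u (a • m)) = a • X.obj.map h (u m)
    exact (congrArg (fun y => X.obj.map h y) (map_smul u.hom a m)).trans (map_smul _ _ _)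

/-- transpose of `u : M ⟶ X(q)` along `Ffun ⊣ evalQ` -/
def fromE (M : ModuleCat.{0} A) (X : ModCA k A C) (u : M ⟶ (evalQ k A C q).obj X) :
    (Ffun q).obj M ⟶ X := ObjectProperty.homMk {
  app p := ModuleCat.ofHom (TensorProduct.AlgebraTensorModule.lift (fromEbil q M X u p))
  naturality p p' f := by
    apply ModuleCat.hom_ext; apply TensorProduct.AlgebraTensorModule.ext; intro m h
    show X.obj.map (h ≫ f) (u m) = X.obj.map f (X.obj.map h (u m))
    rw [X.obj.map_comp]; rfl }

/-- transpose of `η : F_q M ⟶ X` along `Ffun ⊣ evalQ` -/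
def toE (M : ModuleCat.{0} A) (X : ModCA k A C) (η : (Ffun q).obj M ⟶ X) :
    M ⟶ (evalQ k A C q).obj X := ModuleCat.ofHom {
  toFun m := η.hom.app q (m ⊗ₜ 𝟙 q)
  map_add' m m' := by
    show η.hom.app q ((m + m') ⊗ₜ 𝟙 q) = η.hom.app q (m ⊗ₜ 𝟙 q) + η.hom.app q (m' ⊗ₜ 𝟙 q)
    rw [TensorProduct.add_tmul]; exact map_add (η.hom.app q).hom _ _
  map_smul' a m := by
    show η.hom.app q ((a • m) ⊗ₜ 𝟙 q) = a • η.hom.app q (m ⊗ₜ 𝟙 q)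
    rw [← TensorProduct.smul_tmul']; exact map_smul (η.hom.app q).hom _ _ }

/-- the adjunction `Ffun ⊣ evalQ` -/
def fEvalAdj : Ffun q ⊣ evalQ k A C q :=
  Adjunction.mkOfHomEquiv
    { homEquiv := fun M X =>
        { toFun := toE q M X
          invFun := fromE q M X
          left_inv := fun η => by
            apply ObjectProperty.hom_ext; apply NatTrans.ext; funext p
            apply ModuleCat.hom_ext; apply TensorProduct.AlgebraTensorModule.ext; intro m h
            have e2 : X.obj.map h (η.hom.app q (m ⊗ₜ 𝟙 q))
                = η.hom.app p (tensL k A C q h M (m ⊗ₜ 𝟙 q)) := by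
              have := congrArg
                (fun (v : (FobjFunctor (k := k) q M).obj q ⟶ X.obj.obj p)
                  => v (m ⊗ₜ 𝟙 q)) (η.hom.naturality h)
              exact this.symm
            show X.obj.map h (η.hom.app q (m ⊗ₜ 𝟙 q)) = η.hom.app p (m ⊗ₜ h)
            rw [e2, tensL_apply, Category.id_comp]
          right_inv := fun u => by
            apply ModuleCat.hom_ext; apply LinearMap.ext; intro m
            show TensorProduct.AlgebraTensorModule.lift (fromEbil q M X u q) (m ⊗ₜ 𝟙 q) = u m
            rw [TensorProduct.AlgebraTensorModule.lift_tmul]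
            show X.obj.map (𝟙 q) (u m) = u m
            rw [X.obj.map_id]; rfl }
      homEquiv_naturality_left_symm := fun f g => by
        apply ObjectProperty.hom_ext; apply NatTrans.ext; funext p
        apply ModuleCat.hom_ext; apply TensorProduct.AlgebraTensorModule.ext; intro m h; rfl
      homEquiv_naturality_right := fun η α => by
        apply ModuleCat.hom_ext; apply LinearMap.ext; intro m; rfl }

end Ffun

section EpiMono

variable {k A C}
variable (q : C)

lemma modca_epi_of_app {X Y : ModCA k A C} (η : X ⟶ Y) (h : ∀ p, Epi (η.hom.app p)) :
    Epi η := by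
  constructor
  intro Z g g' w
  apply ObjectProperty.hom_ext; apply NatTrans.ext; funext p
  have hw := congrArg (fun (ν : X ⟶ Z) => ν.hom.app p) w
  exact (cancel_epi (η.hom.app p)).mp hw

lemma modca_mono_of_app {X Y : ModCA k A C} (η : X ⟶ Y) (h : ∀ p, Mono (η.hom.app p)) :
    Mono η := by
  constructor
  intro Z g g' w
  apply ObjectProperty.hom_ext; apply NatTrans.ext; funext p
  have hw := congrArg (fun (ν : Z ⟶ Y) => ν.hom.app p) w
  exact (cancel_mono (η.hom.app p)).mp hw

lemma gfun_preservesEpi (hproj : ∀ p q : C, Module.Projective k (p ⟶ q)) :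
    ((Gfun (k := k) (A := A) (C := C) q)).PreservesEpimorphisms := by
  constructor
  intro M N e he
  apply modca_epi_of_app
  intro p
  rw [ModuleCat.epi_iff_surjective]
  intro ψ
  haveI := hproj p q
  have hsurj : Function.Surjective (LinearMap.restrictScalars k e.hom) :=
    (ModuleCat.epi_iff_surjective e).mp he
  obtain ⟨h, hh⟩ := Module.projective_lifting_property (LinearMap.restrictScalars k e.hom) ψ hsurj
  exact ⟨h, hh⟩

lemma ffun_preservesMono (hproj : ∀ p q : C, Module.Projective k (p ⟶ q)) :
    ((Ffun (k := k) (A := A) (C := C) q)).PreservesMonomorphisms := by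
  constructor
  intro M N e he
  apply modca_mono_of_app
  intro p
  rw [ModuleCat.mono_iff_injective]
  haveI := hproj q p
  haveI : Module.Flat k (q ⟶ p) := Module.Flat.of_projective
  have hinjL : Function.Injective (LinearMap.restrictScalars k e.hom) :=
    (ModuleCat.mono_iff_injective e).mp he
  have hinj : Function.Injective
      (LinearMap.rTensor (q ⟶ p) (LinearMap.restrictScalars k e.hom)) :=
    Module.Flat.rTensor_preserves_injective_linearMap _ hinjL
  have heq : LinearMap.restrictScalars k (TensorProduct.AlgebraTensorModule.map e.hom LinearMap.id : TensorProduct k M (q ⟶ p) →ₗ[A] TensorProduct k N (q ⟶ p))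
      = LinearMap.rTensor (q ⟶ p) (LinearMap.restrictScalars k e.hom) :=
    TensorProduct.ext' (fun m h => rfl)
  have hco : ⇑(((Ffun q).map e).hom.app p)
      = ⇑(LinearMap.rTensor (q ⟶ p) (LinearMap.restrictScalars k e.hom)) :=
    congrArg (fun (g : TensorProduct k M (q ⟶ p) →ₗ[k] TensorProduct k N (q ⟶ p)) => ⇑g) heq
  rw [show ⇑(((Ffun q).map e).hom.app p)
      = ⇑(LinearMap.rTensor (q ⟶ p) (LinearMap.restrictScalars k e.hom)) from hco]
  exact hinj

lemma evalQ_preservesEpi : (evalQ k A C q).PreservesEpimorphisms := by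
  constructor
  intro X Y η he
  rw [ModuleCat.epi_iff_surjective]
  set R := LinearMap.range (η.hom.app q).hom with hR
  set Qt := ModuleCat.of A (((evalQ k A C q).obj Y) ⧸ R) with hQt
  set π : (evalQ k A C q).obj Y ⟶ Qt := ModuleCat.ofHom R.mkQ with hπ
  have hcomp : η.hom.app q ≫ π = η.hom.app q ≫ (0 : (evalQ k A C q).obj Y ⟶ Qt) := by
    apply ModuleCat.hom_ext; apply LinearMap.ext; intro x
    show R.mkQ (η.hom.app q x) = 0
    rw [Submodule.mkQ_apply, Submodule.Quotient.mk_eq_zero]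
    exact LinearMap.mem_range_self _ x
  have hnat : ∀ (u : (evalQ k A C q).obj Y ⟶ Qt),
      (evalGAdj q).homEquiv X Qt ((evalQ k A C q).map η ≫ u)
        = η ≫ (evalGAdj q).homEquiv Y Qt u := fun u =>
    Adjunction.homEquiv_naturality_left _ η u
  have h2 : η ≫ (evalGAdj q).homEquiv Y Qt π = η ≫ (evalGAdj q).homEquiv Y Qt 0 := by
    rw [← hnat, ← hnat]
    exact congrArg _ hcomp
  have h3 : (evalGAdj q).homEquiv Y Qt π = (evalGAdj q).homEquiv Y Qt 0 :=
    (cancel_epi η).mp h2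
  have h4 : π = (0 : (evalQ k A C q).obj Y ⟶ Qt) := ((evalGAdj q).homEquiv Y Qt).injective h3
  intro y
  have h5 : R.mkQ y = 0 := congrArg (fun (g : (evalQ k A C q).obj Y ⟶ Qt) => g y) h4
  have h6 : y ∈ R := by
    exact (Submodule.Quotient.mk_eq_zero R (x := y)).mp h5
  exact h6

end EpiMono

section ZeroApp

variable {k A C}

/-- the pointwise zero morphism in `ModCA` -/
def pzero (X Y : ModCA k A C) : X ⟶ Y := ObjectProperty.homMk {
  app p := 0
  naturality p p' f := by rw [Limits.comp_zero, Limits.zero_comp] }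

/-- the pointwise zero-morphism structure on `ModCA` -/
def zstruct : Limits.HasZeroMorphisms (ModCA k A C) where
  zero X Y := ⟨pzero X Y⟩
  comp_zero {X Y} f Z := by
    apply ObjectProperty.hom_ext; apply NatTrans.ext; funext p
    exact Limits.comp_zero
  zero_comp X {Y Z} f := by
    apply ObjectProperty.hom_ext; apply NatTrans.ext; funext p
    exact Limits.zero_comp

lemma modca_zero_eq (I : Limits.HasZeroMorphisms (ModCA k A C)) (X Y : ModCA k A C) :
    (I.zero X Y).zero = pzero X Y := by
  rw [Subsingleton.elim I (zstruct (k := k) (A := A) (C := C))]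
  rfl

lemma ffun_preservesZero (q : C) (I : Limits.HasZeroMorphisms (ModCA k A C)) :
    @Functor.PreservesZeroMorphisms _ _ _ _ _ I (Ffun (k := k) (A := A) (C := C) q) := by
  constructor
  intro M N
  show (Ffun (k := k) q).map 0 = (I.zero _ _).zero
  rw [modca_zero_eq I]
  apply ObjectProperty.hom_ext; apply NatTrans.ext; funext p
  apply ModuleCat.hom_ext; apply TensorProduct.AlgebraTensorModule.ext; intro m h
  have h1 : (((Ffun (k := k) q).map (0 : M ⟶ N)).hom.app p) (m ⊗ₜ h) = (0 : M ⟶ N) m ⊗ₜ h := rfl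
  have h2 : ((0 : M ⟶ N) m) ⊗ₜ[k] h = (0 : TensorProduct k N (q ⟶ p)) := by
    rw [show (0 : M ⟶ N) m = (0 : N) from rfl]
    exact TensorProduct.zero_tmul _ h
  exact h1.trans (h2.trans rfl)

end ZeroApp

theorem statement1
    (hproj : ∀ p q : C, Module.Projective k (p ⟶ q))
    [Abelian (ModCA k A C)]
    (X : ModCA k A C) (q : C) :
    (Projective X → Projective ((evalQ k A C q).obj X)) ∧
    (Injective X → Injective ((evalQ k A C q).obj X)) ∧
    (IsFlatObj X → IsFlatObj ((evalQ k A C q).obj X)) ∧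
    (IsCotorsion X → IsCotorsion ((evalQ k A C q).obj X)) := by
  haveI hGe := gfun_preservesEpi (k := k) (A := A) (C := C) q hproj
  haveI hFm := ffun_preservesMono (k := k) (A := A) (C := C) q hproj
  haveI hEe := evalQ_preservesEpi (k := k) (A := A) (C := C) q
  haveI hEc : Limits.PreservesColimitsOfSize.{0, 0} (evalQ k A C q) :=
    (evalGAdj (k := k) (A := A) (C := C) q).leftAdjoint_preservesColimits
  haveI hFc : Limits.PreservesColimitsOfSize.{0, 0} (Ffun (k := k) (A := A) (C := C) q) :=
    (fEvalAdj (k := k) (A := A) (C := C) q).leftAdjoint_preservesColimits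
  refine ⟨?_, ?_, ?_, ?_⟩
  · intro hP
    exact (evalGAdj q).map_projective X hP
  · intro hI
    exact (fEvalAdj q).map_injective X hI
  · rintro ⟨J, iJ, iF, D, c, hpr, ⟨hcl⟩, ⟨iso⟩⟩
    exact ⟨J, iJ, iF, D ⋙ evalQ k A C q, (evalQ k A C q).mapCocone c,
      fun j => (evalGAdj q).map_projective _ (hpr j),
      ⟨isColimitOfPreserves _ hcl⟩, ⟨(evalQ k A C q).mapIso iso⟩⟩
  · intro hX F hF Y i p w hse
    letI instP : Preadditive (ModCA k A C) := Abelian.toPreadditive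
    letI instZ : Limits.HasZeroMorphisms (ModCA k A C) := Preadditive.preadditiveHasZeroMorphisms
    haveI hFz := ffun_preservesZero (k := k) (A := A) (C := C) q instZ
    haveI := hse.mono_f
    haveI := hse.epi_g
    haveI : Mono ((Ffun (k := k) q).map i) := hFm.preserves i
    -- the pushout of `F_q` applied to the sequence along the counit
    set ε : (Ffun (k := k) q).obj ((evalQ k A C q).obj X) ⟶ X :=
      (fEvalAdj q).counit.app X with hε
    set P := pushout ((Ffun (k := k) q).map i) ε with hP
    set j : X ⟶ P := pushout.inr _ _ with hj
    haveI hmj : Mono j := CategoryTheory.Abelian.mono_pushout_of_mono_f _ _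
    have hcomm : (Ffun (k := k) q).map i ≫ (Ffun (k := k) q).map p = ε ≫ 0 := by
      rw [← Functor.map_comp, w, Functor.map_zero, Limits.comp_zero]
    set π : P ⟶ (Ffun (k := k) q).obj F := pushout.desc ((Ffun q).map p) 0 hcomm with hπ
    have w' : j ≫ π = 0 := pushout.inr_desc _ _ _
    -- `F_q p` is epi
    have hepiFp : Epi ((Ffun (k := k) q).map p) := by
      apply modca_epi_of_app
      intro r
      rw [ModuleCat.epi_iff_surjective]
      have hsurj : Function.Surjective (LinearMap.restrictScalars k p.hom) :=
        (ModuleCat.epi_iff_surjective p).mp hse.epi_g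
      have hs2 : Function.Surjective
          (LinearMap.rTensor (q ⟶ r) (LinearMap.restrictScalars k p.hom)) :=
        LinearMap.rTensor_surjective _ hsurj
      have heq : LinearMap.restrictScalars k (TensorProduct.AlgebraTensorModule.map p.hom LinearMap.id : TensorProduct k Y (q ⟶ r) →ₗ[A] TensorProduct k F (q ⟶ r))
          = LinearMap.rTensor (q ⟶ r) (LinearMap.restrictScalars k p.hom) :=
        TensorProduct.ext' (fun m h => rfl)
      have hco : ⇑(((Ffun (k := k) q).map p).hom.app r)
          = ⇑(LinearMap.rTensor (q ⟶ r) (LinearMap.restrictScalars k p.hom)) :=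
        congrArg (fun (g : TensorProduct k Y (q ⟶ r) →ₗ[k] TensorProduct k F (q ⟶ r)) => ⇑g) heq
      rw [show ⇑(((Ffun (k := k) q).map p).hom.app r)
          = ⇑(LinearMap.rTensor (q ⟶ r) (LinearMap.restrictScalars k p.hom)) from hco]
      exact hs2
    have hepiπ : Epi π := by
      have h1 : pushout.inl _ _ ≫ π = (Ffun (k := k) q).map p := pushout.inl_desc _ _ _
      haveI : Epi (pushout.inl ((Ffun (k := k) q).map i) ε ≫ π) := by
        rw [h1]; exact hepiFp
      exact epi_of_epi (pushout.inl _ _) π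
    -- `F_q p` is a cokernel of `F_q i`
    have hcok : IsColimit (CokernelCofork.ofπ p w) := hse.exact.gIsCokernel
    have hq' := CokernelCofork.mapIsColimit _ hcok (Ffun (k := k) q)
    -- `π` is a cokernel of `j`
    have hcolim : IsColimit (CokernelCofork.ofπ π w') := by
      refine CokernelCofork.IsColimit.ofπ' π w' (fun {T} t ht => ?_)
      have h0 : (Ffun (k := k) q).map i ≫ (pushout.inl _ _ ≫ t) = 0 := by
        rw [← Category.assoc, pushout.condition, Category.assoc, ht, Limits.comp_zero]
      refine ⟨hq'.desc (CokernelCofork.ofπ (pushout.inl _ _ ≫ t) h0), ?_⟩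
      apply pushout.hom_ext
      · erw [← Category.assoc, pushout.inl_desc]
        exact Cofork.IsColimit.π_desc hq'
      · erw [← Category.assoc, pushout.inr_desc, Limits.zero_comp, ht]
    have hexact : (ShortComplex.mk j π w').Exact :=
      ShortComplex.exact_of_g_is_cokernel _ hcolim
    have hse' : (ShortComplex.mk j π w').ShortExact :=
      { exact := hexact, mono_f := hmj, epi_g := hepiπ }
    -- `F_q F` is flat
    have hflat : IsFlatObj ((Ffun (k := k) q).obj F) := by
      obtain ⟨J, iJ, iF, D, c, hpr, ⟨hcl⟩, ⟨iso⟩⟩ := hF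
      exact ⟨J, iJ, iF, D ⋙ Ffun (k := k) q, (Ffun (k := k) q).mapCocone c,
        fun j' => (fEvalAdj q).map_projective _ (hpr j'),
        ⟨isColimitOfPreserves _ hcl⟩, ⟨(Ffun (k := k) q).mapIso iso⟩⟩
    obtain ⟨ρ, hρ⟩ := hX _ hflat P j π w' hse'
    set η : (Ffun (k := k) q).obj Y ⟶ X := pushout.inl _ _ ≫ ρ with hη
    have hext : (Ffun (k := k) q).map i ≫ η = ε := by
      rw [hη, ← Category.assoc, pushout.condition, Category.assoc, hρ, Category.comp_id]
    refine ⟨(fEvalAdj q).homEquiv Y X η, ?_⟩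
    have hnat := Adjunction.homEquiv_naturality_left (fEvalAdj (k := k) q) i η
    rw [← hnat, hext, hε]
    rw [Adjunction.homEquiv_unit]
    exact (fEvalAdj q).right_triangle_components X
end Paper
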